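/- arXiv:2401.11230 — 6 statements merged into one kernel-verified Lean document; each statement's English description precedes it below -/
import Mathlib

section
/- The function λ satisfies the transport equation (∂_t + u∂_x + v∂_y)λ = ∂_x φ − (∂_x u)(∂_x u) − (∂_y φ)∫₀^y 𝒰(t,x,ỹ)dỹ on (0,T) × R²₊; in particular, the term involving v with the highest-order tangential derivative cancels. -/
open MeasureTheory Real Filter

noncomputable section

namespace HypP

/-- Japanese bracket `⟨y⟩ = (1+y²)^{1/2}`. -/
def br (y : ℝ) : ℝ := Real.sqrt (1 + y ^ 2)

/-- Weighting a function of `(x,y)` by `⟨y⟩^e`. -/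
def wt (e : ℝ) (g : ℝ → ℝ → ℝ) : ℝ → ℝ → ℝ := fun x y => br y ^ e * g x y

/-- `m`-th tangential derivative `∂ₓ^m`. -/
def Dx (m : ℕ) (g : ℝ → ℝ → ℝ) : ℝ → ℝ → ℝ :=
  fun x y => iteratedDeriv m (fun x' => g x' y) x

/-- `k`-th normal derivative `∂_y^k`. -/
def Dy (k : ℕ) (g : ℝ → ℝ → ℝ) : ℝ → ℝ → ℝ :=
  fun x y => iteratedDeriv k (fun y' => g x y') y

/-- Squared `L²` norm on the half-plane `ℝ × (0,∞)`. -/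
def sqL2 (g : ℝ → ℝ → ℝ) : ℝ := ∫ x : ℝ, ∫ y in Set.Ioi (0 : ℝ), (g x y) ^ 2

/-- `L²` inner product on the half-plane. -/
def ipL2 (f g : ℝ → ℝ → ℝ) : ℝ := ∫ x : ℝ, ∫ y in Set.Ioi (0 : ℝ), f x y * g x y

/-- Squared `L²ₓL^∞_y` norm on the half-plane. -/
def sqL2xLinfy (g : ℝ → ℝ → ℝ) : ℝ :=
  ∫ x : ℝ, (sSup ((fun y => |g x y|) '' Set.Ioi (0 : ℝ))) ^ 2

/-- The weight `H_{ρ,m,k}`. -/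
def Hc (ρ : ℝ) (m k : ℕ) : ℝ :=
  ρ ^ (m + k + 1) * ((m : ℝ) + (k : ℝ) + 1) ^ 9 /
    (((m + k).factorial : ℝ) * Real.sqrt (m.factorial : ℝ))

/-- The weight `N_{ρ,m} = H_{ρ,m,0}`. -/
def Nc (ρ : ℝ) (m : ℕ) : ℝ := Hc ρ m 0

/-- The weight `L_{ρ,k} = H_{ρ,1,k}`. -/
def Lc (ρ : ℝ) (k : ℕ) : ℝ := Hc ρ 1 k

/-- Squared anisotropic Gevrey norm `‖h‖²_{G^{3/2,1}_{ρ,ℓ}}`. -/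
def gevSq (ρ ℓ : ℝ) (h : ℝ → ℝ → ℝ) : ℝ :=
  (∑' m : ℕ, (Nc ρ m * Real.sqrt (sqL2 (wt (ℓ - 1) (Dx m h)))) ^ 2)
  + ∑' m : ℕ, ∑' k : ℕ,
      (((m : ℝ) + 1) * Hc ρ (m + 1) k *
        Real.sqrt (sqL2 (wt ℓ (Dx m (Dy (k + 1) h))))) ^ 2

/-- Anisotropic Gevrey norm. -/
def gevNorm (ρ ℓ : ℝ) (h : ℝ → ℝ → ℝ) : ℝ := Real.sqrt (gevSq ρ ℓ h)

/-- Membership in the anisotropic Gevrey space `G^{3/2,1}_{ρ,ℓ}`. -/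
def InGev (ρ ℓ : ℝ) (h : ℝ → ℝ → ℝ) : Prop :=
  Summable (fun m : ℕ => (Nc ρ m * Real.sqrt (sqL2 (wt (ℓ - 1) (Dx m h)))) ^ 2) ∧
  Summable (fun p : ℕ × ℕ =>
    (((p.1 : ℝ) + 1) * Hc ρ (p.1 + 1) p.2 *
      Real.sqrt (sqL2 (wt ℓ (Dx p.1 (Dy (p.2 + 1) h))))) ^ 2)

/-- Time derivative `∂ₜ`. -/
def pt (u : ℝ → ℝ → ℝ → ℝ) : ℝ → ℝ → ℝ → ℝ := fun t x y => deriv (fun s => u s x y) t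

/-- Tangential derivative `∂ₓ` (time-dependent functions). -/
def px (u : ℝ → ℝ → ℝ → ℝ) : ℝ → ℝ → ℝ → ℝ := fun t x y => deriv (fun x' => u t x' y) x

/-- Normal derivative `∂_y` (time-dependent functions). -/
def py (u : ℝ → ℝ → ℝ → ℝ) : ℝ → ℝ → ℝ → ℝ := fun t x y => deriv (fun y' => u t x y') y

/-- The normal velocity `v(t,x,y) = -∫₀^y ∂ₓu(t,x,ỹ) dỹ`. -/
def vv (u : ℝ → ℝ → ℝ → ℝ) : ℝ → ℝ → ℝ → ℝ :=
  fun t x y => -∫ s in (0 : ℝ)..y, px u t x s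

/-- The auxiliary function `φ = ∂ₜu + u∂ₓu + v∂_yu`. -/
def phi (u : ℝ → ℝ → ℝ → ℝ) : ℝ → ℝ → ℝ → ℝ :=
  fun t x y => pt u t x y + u t x y * px u t x y + vv u t x y * py u t x y

/-- `u` solves the 2D hyperbolic Prandtl system on `[0,T]`, with the no-slip boundary
condition and decay of `u` at `y → ∞`. -/
def Solves (u : ℝ → ℝ → ℝ → ℝ) (T : ℝ) : Prop :=
  (∀ t ∈ Set.Icc (0 : ℝ) T, ∀ x : ℝ, ∀ y ∈ Set.Ioi (0 : ℝ),
      pt (pt u) t x y + pt u t x y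
        + u t x y * px u t x y + vv u t x y * py u t x y
        + pt (fun t' x' y' => u t' x' y' * px u t' x' y' + vv u t' x' y' * py u t' x' y') t x y
        - py (py u) t x y = 0)
  ∧ (∀ t ∈ Set.Icc (0 : ℝ) T, ∀ x : ℝ, u t x 0 = 0)
  ∧ (∀ t ∈ Set.Icc (0 : ℝ) T, ∀ x : ℝ, Tendsto (fun y => u t x y) atTop (nhds 0))

/-- `U` is the auxiliary function `𝒰` solving
`(∂ₜ + u∂ₓ + v∂_y)∫₀^y 𝒰 dỹ = -∂ₓv`, `𝒰|_{t=0} = 0`. -/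
def AuxU (u U : ℝ → ℝ → ℝ → ℝ) (T : ℝ) : Prop :=
  (∀ t ∈ Set.Icc (0 : ℝ) T, ∀ x : ℝ, ∀ y ∈ Set.Ioi (0 : ℝ),
      pt (fun t' x' y' => ∫ s in (0 : ℝ)..y', U t' x' s) t x y
        + u t x y * px (fun t' x' y' => ∫ s in (0 : ℝ)..y', U t' x' s) t x y
        + vv u t x y * py (fun t' x' y' => ∫ s in (0 : ℝ)..y', U t' x' s) t x y
        = -px (vv u) t x y)
  ∧ (∀ x : ℝ, ∀ y : ℝ, U 0 x y = 0)

/-- The auxiliary function `λ = ∂ₓu - (∂_yu)∫₀^y 𝒰 dỹ`. -/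
def lam (u U : ℝ → ℝ → ℝ → ℝ) : ℝ → ℝ → ℝ → ℝ :=
  fun t x y => px u t x y - py u t x y * ∫ s in (0 : ℝ)..y, U t x s

/-- `|a|²_{X_ρ}` for a time slice `a = (us, Us, ls, fs)` of `(u, 𝒰, λ, φ)`. -/
def Xsq (ρ ℓ : ℝ) (us Us ls fs : ℝ → ℝ → ℝ) : ℝ :=
  (∑' m : ℕ, (Nc ρ (m + 1)) ^ 2 * sqL2 (Dx m Us))
  + (∑' m : ℕ, ((m : ℝ) + 1) * (Nc ρ (m + 1)) ^ 2 * sqL2 (wt (ℓ - 1) (Dx m ls)))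
  + ∑' m : ℕ, ∑' k : ℕ, ((m : ℝ) + 1) ^ 2 * (Hc ρ (m + 1) k) ^ 2 *
      (sqL2 (wt ℓ (Dx m (Dy k fs))) + sqL2 (wt ℓ (Dx m (Dy (k + 1) us))))

/-- `|a|²_{Y_ρ}` for a time slice `a = (us, Us, ls, fs)` of `(u, 𝒰, λ, φ)`. -/
def Ysq (ρ ℓ : ℝ) (us Us ls fs : ℝ → ℝ → ℝ) : ℝ :=
  (∑' m : ℕ, ((m : ℝ) + 1) * (Nc ρ (m + 1)) ^ 2 * sqL2 (Dx m Us))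
  + (∑' m : ℕ, ((m : ℝ) + 1) ^ 2 * (Nc ρ (m + 1)) ^ 2 * sqL2 (wt (ℓ - 1) (Dx m ls)))
  + ∑' m : ℕ, ∑' k : ℕ, ((m : ℝ) + (k : ℝ) + 1) * ((m : ℝ) + 1) ^ 2 * (Hc ρ (m + 1) k) ^ 2 *
      (sqL2 (wt ℓ (Dx m (Dy k fs))) + sqL2 (wt ℓ (Dx m (Dy (k + 1) us))))

/-- `|a|_{X_ρ}`. -/
def Xnorm (ρ ℓ : ℝ) (us Us ls fs : ℝ → ℝ → ℝ) : ℝ := Real.sqrt (Xsq ρ ℓ us Us ls fs)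

/-- `|a|_{Y_ρ}`. -/
def Ynorm (ρ ℓ : ℝ) (us Us ls fs : ℝ → ℝ → ℝ) : ℝ := Real.sqrt (Ysq ρ ℓ us Us ls fs)

end HypP

open HypP

namespace LamAux

abbrev E3 := ℝ × ℝ × ℝ

def pd (e : E3) (F : E3 → ℝ) : E3 → ℝ := fun p => fderiv ℝ F p e

lemma pd_contDiff {F : E3 → ℝ} (hF : ContDiff ℝ (⊤ : ℕ∞) F) (e : E3) : ContDiff ℝ (⊤ : ℕ∞) (pd e F) :=
  (hF.fderiv_right (by simp)).clm_apply contDiff_const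

lemma hasDerivAt_pd {F : E3 → ℝ} (hF : ContDiff ℝ (⊤ : ℕ∞) F) {L : ℝ → E3} {e : E3} {t : ℝ}
    (hL : HasDerivAt L e t) :
    HasDerivAt (fun s => F (L s)) (pd e F (L t)) t :=
  ((hF.differentiable (by simp) (L t)).hasFDerivAt).comp_hasDerivAt t hL

lemma pd_comm {F : E3 → ℝ} (hF : ContDiff ℝ (⊤ : ℕ∞) F) (e e' : E3) (p : E3) :
    pd e (pd e' F) p = pd e' (pd e F) p := by
  set f'' := fderiv ℝ (fderiv ℝ F) p with hf''
  have hdf : ∀ q, HasFDerivAt F (fderiv ℝ F q) q := fun q => (hF.differentiable (by simp) q).hasFDerivAt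
  have hdf2 : HasFDerivAt (fderiv ℝ F) f'' p :=
    (((hF.fderiv_right (m := (⊤ : ℕ∞)) (by simp)).differentiable (by simp)) p).hasFDerivAt
  have key : ∀ a b : E3, pd b (pd a F) p = f'' b a := by
    intro a b
    have h1 : HasFDerivAt (pd a F) ((ContinuousLinearMap.apply ℝ ℝ a).comp f'') p :=
      ((ContinuousLinearMap.apply ℝ ℝ a).hasFDerivAt).comp p hdf2
    simp [pd, h1.fderiv]
  rw [key, key, second_derivative_symmetric hdf hdf2 e e']

lemma sliceT {F : E3 → ℝ} (hF : ContDiff ℝ (⊤ : ℕ∞) F) (a b c : ℝ) :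
    HasDerivAt (fun s => F (s, b, c)) (pd (1, 0, 0) F (a, b, c)) a := by
  exact hasDerivAt_pd hF
    ((hasDerivAt_id a).prodMk ((hasDerivAt_const a b).prodMk (hasDerivAt_const a c)))

lemma sliceX {F : E3 → ℝ} (hF : ContDiff ℝ (⊤ : ℕ∞) F) (a b c : ℝ) :
    HasDerivAt (fun r => F (a, r, c)) (pd (0, 1, 0) F (a, b, c)) b := by
  exact hasDerivAt_pd hF
    ((hasDerivAt_const b a).prodMk ((hasDerivAt_id b).prodMk (hasDerivAt_const b c)))

lemma sliceY {F : E3 → ℝ} (hF : ContDiff ℝ (⊤ : ℕ∞) F) (a b c : ℝ) :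
    HasDerivAt (fun w => F (a, b, w)) (pd (0, 0, 1) F (a, b, c)) c := by
  exact hasDerivAt_pd hF
    ((hasDerivAt_const c a).prodMk ((hasDerivAt_const c b).prodMk (hasDerivAt_id c)))

lemma deriv_slice {G : ℝ → ℝ → ℝ} (hG : ContDiff ℝ (⊤ : ℕ∞) (fun p : ℝ × ℝ => G p.1 p.2)) (x s : ℝ) :
    HasDerivAt (fun r => G r s) (fderiv ℝ (fun p : ℝ × ℝ => G p.1 p.2) (x, s) (1, 0)) x := by
  have hL : HasDerivAt (fun r : ℝ => (r, s)) ((1 : ℝ), (0 : ℝ)) x :=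
    (hasDerivAt_id x).prodMk (hasDerivAt_const x s)
  exact ((hG.differentiable (by simp) (x, s)).hasFDerivAt).comp_hasDerivAt x hL

lemma diffAt_intParam {G : ℝ → ℝ → ℝ} (hG : ContDiff ℝ (⊤ : ℕ∞) (fun p : ℝ × ℝ => G p.1 p.2))
    (y x : ℝ) :
    DifferentiableAt ℝ (fun x' => ∫ s in (0:ℝ)..y, G x' s) x := by
  set Gu : ℝ × ℝ → ℝ := fun p => G p.1 p.2 with hGu
  set G' : ℝ → ℝ → ℝ := fun r s => fderiv ℝ Gu (r, s) (1, 0) with hG'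
  have hG'cont : Continuous (fun p : ℝ × ℝ => G' p.1 p.2) := by
    have : ContDiff ℝ (⊤ : ℕ∞) (fun p : ℝ × ℝ => fderiv ℝ Gu p (1, 0)) :=
      (hG.fderiv_right (by simp)).clm_apply contDiff_const
    simpa [hG'] using this.continuous
  obtain ⟨C, hC⟩ := (IsCompact.exists_bound_of_continuousOn
    ((isCompact_closedBall x 1).prod isCompact_uIcc) hG'cont.continuousOn)
  have hmain := intervalIntegral.hasDerivAt_integral_of_dominated_loc_of_deriv_le
    (F := fun x' s => G x' s) (F' := fun x' s => G' x' s) (x₀ := x) (a := 0) (b := y)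
    (bound := fun _ => C) (s := Metric.ball x 1) (μ := volume) (Metric.ball_mem_nhds x one_pos)
    (Filter.Eventually.of_forall (fun x' =>
      ((hG.continuous.comp (Continuous.prodMk_right x')).aestronglyMeasurable)))
    ((hG.continuous.comp (Continuous.prodMk_right x)).intervalIntegrable 0 y :
      IntervalIntegrable _ volume 0 y)
    ((hG'cont.comp (Continuous.prodMk_right x)).aestronglyMeasurable)
    ?_ (intervalIntegrable_const) ?_
  · exact hmain.2.differentiableAt
  · refine Filter.Eventually.of_forall ?_
    intro s hs x' hx'
    exact hC (x', s) ⟨Metric.ball_subset_closedBall hx', Set.uIoc_subset_uIcc hs⟩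
  · refine Filter.Eventually.of_forall ?_
    intro s _ x' _
    exact deriv_slice hG x' s

end LamAux


/-- equation (2.10): the auxiliary function `λ = ∂ₓu − (∂_yu)∫₀^y𝒰dỹ`
satisfies the transport equation
`(∂ₜ + u∂ₓ + v∂_y)λ = ∂ₓφ − (∂ₓu)(∂ₓu) − (∂_yφ)∫₀^y𝒰dỹ` on `(0,T) × ℝ²₊`. -/
theorem lambda_transport_equation
    (T : ℝ) (hT : 0 < T) (u U : ℝ → ℝ → ℝ → ℝ)
    (hu : ContDiff ℝ (⊤ : ℕ∞) (fun p : ℝ × ℝ × ℝ => u p.1 p.2.1 p.2.2))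
    (hU : ContDiff ℝ (⊤ : ℕ∞) (fun p : ℝ × ℝ × ℝ => U p.1 p.2.1 p.2.2))
    (hsol : Solves u T) (haux : AuxU u U T) :
    ∀ t ∈ Set.Ioo (0 : ℝ) T, ∀ x : ℝ, ∀ y ∈ Set.Ioi (0 : ℝ),
      pt (lam u U) t x y + u t x y * px (lam u U) t x y
          + vv u t x y * py (lam u U) t x y
        = px (phi u) t x y - px u t x y * px u t x y
          - py (phi u) t x y * ∫ s in (0 : ℝ)..y, U t x s := by
  intro t ht x y hy
  have hu' : ContDiff ℝ (⊤ : ℕ∞) (fun p : LamAux.E3 => u p.1 p.2.1 p.2.2) := hu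
  have hU' : ContDiff ℝ (⊤ : ℕ∞) (fun p : LamAux.E3 => U p.1 p.2.1 p.2.2) := hU
  set Fu : LamAux.E3 → ℝ := fun p => u p.1 p.2.1 p.2.2 with hFudef
  set FU : LamAux.E3 → ℝ := fun p => U p.1 p.2.1 p.2.2 with hFUdef
  -- partial derivatives of u as pd's
  have hpt : ∀ a b c : ℝ, pt u a b c = LamAux.pd (1,0,0) Fu (a,b,c) := fun a b c =>
    (LamAux.sliceT hu' a b c).deriv
  have hpx : ∀ a b c : ℝ, px u a b c = LamAux.pd (0,1,0) Fu (a,b,c) := fun a b c =>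
    (LamAux.sliceX hu' a b c).deriv
  have hpy : ∀ a b c : ℝ, py u a b c = LamAux.pd (0,0,1) Fu (a,b,c) := fun a b c =>
    (LamAux.sliceY hu' a b c).deriv
  have hpd1 : ContDiff ℝ (⊤ : ℕ∞) (LamAux.pd (1,0,0) Fu) := LamAux.pd_contDiff hu' _
  have hpd2 : ContDiff ℝ (⊤ : ℕ∞) (LamAux.pd (0,1,0) Fu) := LamAux.pd_contDiff hu' _
  have hpd3 : ContDiff ℝ (⊤ : ℕ∞) (LamAux.pd (0,0,1) Fu) := LamAux.pd_contDiff hu' _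
  -- vv rewritten through pd
  have hvv : ∀ a b c : ℝ, vv u a b c = -∫ s in (0:ℝ)..c, LamAux.pd (0,1,0) Fu (a,b,s) := by
    intro a b c
    unfold vv
    congr 1
    exact intervalIntegral.integral_congr (fun s _ => hpx a b s)
  -- integral quantities
  set I := ∫ s in (0:ℝ)..y, U t x s with hIdef
  set It := deriv (fun a : ℝ => ∫ s in (0:ℝ)..y, U a x s) t with hItdef
  set Ix := deriv (fun b : ℝ => ∫ s in (0:ℝ)..y, U t b s) x with hIxdef
  set J := ∫ s in (0:ℝ)..y, LamAux.pd (0,1,0) Fu (t,x,s) with hJdef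
  set W := deriv (fun b : ℝ => ∫ s in (0:ℝ)..y, LamAux.pd (0,1,0) Fu (t,b,s)) x with hWdef
  have hItH : HasDerivAt (fun a : ℝ => ∫ s in (0:ℝ)..y, U a x s) It t := by
    refine DifferentiableAt.hasDerivAt ?_
    exact LamAux.diffAt_intParam
      (hU'.comp (contDiff_fst.prodMk (contDiff_const.prodMk contDiff_snd))) y t
  have hIxH : HasDerivAt (fun b : ℝ => ∫ s in (0:ℝ)..y, U t b s) Ix x := by
    refine DifferentiableAt.hasDerivAt ?_
    exact LamAux.diffAt_intParam (hU'.comp (contDiff_const.prodMk contDiff_id)) y x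
  have hIyH : HasDerivAt (fun c : ℝ => ∫ s in (0:ℝ)..c, U t x s) (U t x y) y := by
    have hcont : Continuous (fun s : ℝ => U t x s) :=
      hU'.continuous.comp (continuous_const.prodMk (continuous_const.prodMk continuous_id))
    exact (hcont.integral_hasStrictDerivAt 0 y).hasDerivAt
  have hWH : HasDerivAt (fun b : ℝ => ∫ s in (0:ℝ)..y, LamAux.pd (0,1,0) Fu (t,b,s)) W x := by
    refine DifferentiableAt.hasDerivAt ?_
    exact LamAux.diffAt_intParam (hpd2.comp (contDiff_const.prodMk contDiff_id)) y x
  have hJyH : HasDerivAt (fun c : ℝ => ∫ s in (0:ℝ)..c, LamAux.pd (0,1,0) Fu (t,x,s))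
      (LamAux.pd (0,1,0) Fu (t,x,y)) y := by
    have hcont : Continuous (fun s : ℝ => LamAux.pd (0,1,0) Fu (t,x,s)) :=
      hpd2.continuous.comp (continuous_const.prodMk (continuous_const.prodMk continuous_id))
    exact (hcont.integral_hasStrictDerivAt 0 y).hasDerivAt
  -- the auxiliary transport equation for the integral of U
  have haux' : It + u t x y * Ix + vv u t x y * U t x y = W := by
    have h := haux.1 t (Set.mem_Icc_of_Ioo ht) x y hy
    have h3 : py (fun t' x' y' => ∫ s in (0:ℝ)..y', U t' x' s) t x y = U t x y := hIyH.deriv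
    rw [h3] at h
    have hVx : px (vv u) t x y = -W := by
      show deriv (fun b => vv u t b y) x = -W
      rw [show (fun b => vv u t b y)
            = fun b => -∫ s in (0:ℝ)..y, LamAux.pd (0,1,0) Fu (t,b,s) from
          funext fun b => hvv t b y]
      exact hWH.neg.deriv
    rw [hVx] at h
    rw [neg_neg] at h
    exact h
  -- derivatives of lam
  have hlamfun : ∀ a b c : ℝ, lam u U a b c
      = LamAux.pd (0,1,0) Fu (a,b,c)
        - LamAux.pd (0,0,1) Fu (a,b,c) * ∫ s in (0:ℝ)..c, U a b s := by
    intro a b c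
    simp only [lam, hpx, hpy]
  have hLT : pt (lam u U) t x y
      = LamAux.pd (1,0,0) (LamAux.pd (0,1,0) Fu) (t,x,y)
        - (LamAux.pd (1,0,0) (LamAux.pd (0,0,1) Fu) (t,x,y) * I
            + LamAux.pd (0,0,1) Fu (t,x,y) * It) := by
    show deriv (fun a => lam u U a x y) t = _
    rw [show (fun a => lam u U a x y)
          = fun a => LamAux.pd (0,1,0) Fu (a,x,y)
              - LamAux.pd (0,0,1) Fu (a,x,y) * ∫ s in (0:ℝ)..y, U a x s from
        funext fun a => hlamfun a x y]
    exact ((LamAux.sliceT hpd2 t x y).sub ((LamAux.sliceT hpd3 t x y).mul hItH)).deriv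
  have hLX : px (lam u U) t x y
      = LamAux.pd (0,1,0) (LamAux.pd (0,1,0) Fu) (t,x,y)
        - (LamAux.pd (0,1,0) (LamAux.pd (0,0,1) Fu) (t,x,y) * I
            + LamAux.pd (0,0,1) Fu (t,x,y) * Ix) := by
    show deriv (fun b => lam u U t b y) x = _
    rw [show (fun b => lam u U t b y)
          = fun b => LamAux.pd (0,1,0) Fu (t,b,y)
              - LamAux.pd (0,0,1) Fu (t,b,y) * ∫ s in (0:ℝ)..y, U t b s from
        funext fun b => hlamfun t b y]
    exact ((LamAux.sliceX hpd2 t x y).sub ((LamAux.sliceX hpd3 t x y).mul hIxH)).deriv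
  have hLY : py (lam u U) t x y
      = LamAux.pd (0,0,1) (LamAux.pd (0,1,0) Fu) (t,x,y)
        - (LamAux.pd (0,0,1) (LamAux.pd (0,0,1) Fu) (t,x,y) * I
            + LamAux.pd (0,0,1) Fu (t,x,y) * U t x y) := by
    show deriv (fun c => lam u U t x c) y = _
    rw [show (fun c => lam u U t x c)
          = fun c => LamAux.pd (0,1,0) Fu (t,x,c)
              - LamAux.pd (0,0,1) Fu (t,x,c) * ∫ s in (0:ℝ)..c, U t x s from
        funext fun c => hlamfun t x c]
    exact ((LamAux.sliceY hpd2 t x y).sub ((LamAux.sliceY hpd3 t x y).mul hIyH)).deriv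
  -- phi rewritten
  have hphifun : ∀ a b c : ℝ, phi u a b c
      = LamAux.pd (1,0,0) Fu (a,b,c)
        + u a b c * LamAux.pd (0,1,0) Fu (a,b,c)
        + (-∫ s in (0:ℝ)..c, LamAux.pd (0,1,0) Fu (a,b,s)) * LamAux.pd (0,0,1) Fu (a,b,c) := by
    intro a b c
    simp only [phi, hpt, hpx, hpy, hvv]
  have hRX : px (phi u) t x y
      = LamAux.pd (0,1,0) (LamAux.pd (1,0,0) Fu) (t,x,y)
        + (LamAux.pd (0,1,0) Fu (t,x,y) * LamAux.pd (0,1,0) Fu (t,x,y)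
            + u t x y * LamAux.pd (0,1,0) (LamAux.pd (0,1,0) Fu) (t,x,y))
        + ((-W) * LamAux.pd (0,0,1) Fu (t,x,y)
            + (-J) * LamAux.pd (0,1,0) (LamAux.pd (0,0,1) Fu) (t,x,y)) := by
    show deriv (fun b => phi u t b y) x = _
    rw [show (fun b => phi u t b y)
          = fun b => LamAux.pd (1,0,0) Fu (t,b,y)
              + u t b y * LamAux.pd (0,1,0) Fu (t,b,y)
              + (-∫ s in (0:ℝ)..y, LamAux.pd (0,1,0) Fu (t,b,s)) * LamAux.pd (0,0,1) Fu (t,b,y) from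
        funext fun b => hphifun t b y]
    have h1 : HasDerivAt (fun b => u t b y) (LamAux.pd (0,1,0) Fu (t,x,y)) x :=
      LamAux.sliceX hu' t x y
    exact (((LamAux.sliceX hpd1 t x y).add (h1.mul (LamAux.sliceX hpd2 t x y))).add
      ((hWH.neg).mul (LamAux.sliceX hpd3 t x y))).deriv
  have hRY : py (phi u) t x y
      = LamAux.pd (0,0,1) (LamAux.pd (1,0,0) Fu) (t,x,y)
        + (LamAux.pd (0,0,1) Fu (t,x,y) * LamAux.pd (0,1,0) Fu (t,x,y)
            + u t x y * LamAux.pd (0,0,1) (LamAux.pd (0,1,0) Fu) (t,x,y))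
        + ((-(LamAux.pd (0,1,0) Fu (t,x,y))) * LamAux.pd (0,0,1) Fu (t,x,y)
            + (-J) * LamAux.pd (0,0,1) (LamAux.pd (0,0,1) Fu) (t,x,y)) := by
    show deriv (fun c => phi u t x c) y = _
    rw [show (fun c => phi u t x c)
          = fun c => LamAux.pd (1,0,0) Fu (t,x,c)
              + u t x c * LamAux.pd (0,1,0) Fu (t,x,c)
              + (-∫ s in (0:ℝ)..c, LamAux.pd (0,1,0) Fu (t,x,s)) * LamAux.pd (0,0,1) Fu (t,x,c) from
        funext fun c => hphifun t x c]
    have h1 : HasDerivAt (fun c => u t x c) (LamAux.pd (0,0,1) Fu (t,x,y)) y :=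
      LamAux.sliceY hu' t x y
    exact (((LamAux.sliceY hpd1 t x y).add (h1.mul (LamAux.sliceY hpd2 t x y))).add
      ((hJyH.neg).mul (LamAux.sliceY hpd3 t x y))).deriv
  -- assemble
  rw [hLT, hLX, hLY, hRX, hRY, hpx t x y, hvv t x y, ← hJdef]
  rw [LamAux.pd_comm hu' (1,0,0) (0,1,0), LamAux.pd_comm hu' (1,0,0) (0,0,1),
    LamAux.pd_comm hu' (0,1,0) (0,0,1)]
  rw [hvv t x y, ← hJdef] at haux'
  linear_combination (-(LamAux.pd (0,0,1) Fu (t,x,y))) * haux'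
end
end

section
/- There exists a constant C, depending only on ρ₀, such that for all integers m ≥ 0 and all 0 ≤ j ≤ ⌊m/2⌋, (m!/(j!(m−j)!)) · N_{ρ,m+1}/(N_{ρ,j+3}·N_{ρ,m−j+1}) ≤ C/(j+1). -/
open MeasureTheory Real Filter

noncomputable section

open HypP

/-!
Write `m = j + b`, so that `j ≤ b`. Squaring removes the square roots in `N_{ρ,n}`, and
```
(C(m,j) · N_{ρ,m+1} / (N_{ρ,j+3} N_{ρ,b+1}))² =
  ((m+2)/((j+4)(b+2)))^18 · ((j+1)(j+2)(j+3)(b+1)/(m+1))³ / (C(m,j) ρ⁸).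
```
The first factor is at most `1`, the second at most `(j+3)⁹`, and `C(m,j) ≥ C(2j,j) ≥ 2^j`.
Hence the left-hand side is `O(ρ⁻⁴ (j+3)^{9/2} 2^{-j/2})`, and the exponential decay absorbs
the factor `j+1`; the constant depends on `ρ` only through `ρ⁻⁴ ≤ (e/ρ₀)⁴`.
-/

open Nat

theorem Nat.two_pow_le_centralBinom (n : ℕ) : 2 ^ n ≤ n.centralBinom := by
  induction n with
  | zero => simp
  | succ n ih =>
    have h : (n + 1) * 2 ^ (n + 1) ≤ (n + 1) * (n + 1).centralBinom := by
      rw [Nat.succ_mul_centralBinom_succ, pow_succ]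
      nlinarith
    exact Nat.le_of_mul_le_mul_left h n.succ_pos

theorem Nat.two_pow_le_add_choose {j b : ℕ} (h : j ≤ b) : 2 ^ j ≤ (j + b).choose j :=
  calc 2 ^ j ≤ j.centralBinom := Nat.two_pow_le_centralBinom j
    _ = (2 * j).choose j := Nat.centralBinom_eq_two_mul_choose j
    _ ≤ (j + b).choose j := Nat.choose_le_choose j (by omega)

theorem exists_natCast_pow_le_mul_pow (k : ℕ) {r : ℝ} (hr : 1 < r) :
    ∃ K : ℝ, 0 < K ∧ ∀ n : ℕ, (n : ℝ) ^ k ≤ K * r ^ n := by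
  obtain ⟨K, hK⟩ := (tendsto_pow_const_div_const_pow_of_one_lt k hr).bddAbove_range
  refine ⟨max K 1, by positivity, fun n => ?_⟩
  rw [← div_le_iff₀ (by positivity)]
  exact (hK ⟨n, rfl⟩).trans (le_max_left _ _)

namespace HypP

theorem Nc_sq (ρ : ℝ) (n : ℕ) :
    Nc ρ n ^ 2 = ρ ^ (2 * n + 2) * ((n : ℝ) + 1) ^ 18 / (n ! : ℝ) ^ 3 := by
  simp only [Nc, Hc, add_zero, Nat.cast_zero]
  rw [div_pow, mul_pow, mul_pow, Real.sq_sqrt (by positivity)]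
  ring

theorem Nc_ratio_sq {ρ : ℝ} (hρ : ρ ≠ 0) (j b : ℕ) :
    (Nc ρ (j + b + 1) / (Nc ρ (j + 3) * Nc ρ (b + 1))) ^ 2 =
      (((j : ℝ) + b + 2) / ((j + 4) * (b + 2))) ^ 18 *
        (((j + 3)! * (b + 1)! : ℕ) / (j + b + 1)! : ℝ) ^ 3 / ρ ^ 8 := by
  rw [div_pow, mul_pow, Nc_sq, Nc_sq, Nc_sq]
  push_cast
  rw [show (j : ℝ) + b + 1 + 1 = j + b + 2 by ring, show (j : ℝ) + 3 + 1 = j + 4 by ring,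
    show (b : ℝ) + 1 + 1 = b + 2 by ring]
  -- Freezing the bases keeps `field_simp; ring` from expanding eighteenth powers.
  generalize (j : ℝ) + b + 2 = x, (j : ℝ) + 4 = y, (b : ℝ) + 2 = z
  field_simp
  ring

theorem factorial_ratio_eq_div_choose (j b : ℕ) :
    (((j + 3)! * (b + 1)! : ℕ) / (j + b + 1)! : ℝ) =
      (j + 1) * (j + 2) * (j + 3) * (b + 1) / (j + b + 1) / (j + b).choose j := by
  have hfac : ((j + b).choose j : ℝ) * j ! * b ! = (j + b)! := by
    exact_mod_cast Nat.add_sub_cancel_left (n := j) (m := b) ▸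
      Nat.choose_mul_factorial_mul_factorial (Nat.le_add_right j b)
  have : ((j + b).choose j : ℝ) ≠ 0 := by
    exact_mod_cast (Nat.choose_pos (Nat.le_add_right j b)).ne'
  simp only [Nat.factorial_succ, Nat.cast_mul, ← hfac]
  push_cast
  field_simp
  ring

theorem sq_choose_mul_Nc_ratio_le {ρ : ℝ} (hρ : 0 < ρ) {j b : ℕ} (hjb : j ≤ b) :
    ((j + b).choose j * (Nc ρ (j + b + 1) / (Nc ρ (j + 3) * Nc ρ (b + 1)))) ^ 2 ≤
      ((j : ℝ) + 3) ^ 9 / (2 ^ j * ρ ^ 8) := by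
  have hchoose : (2 : ℝ) ^ j ≤ (j + b).choose j := by
    exact_mod_cast Nat.two_pow_le_add_choose hjb
  have hchoose_pos : (0 : ℝ) < (j + b).choose j := lt_of_lt_of_le (by positivity) hchoose
  have hweight : ((j : ℝ) + b + 2) / ((j + 4) * (b + 2)) ≤ 1 := by
    rw [div_le_one (by positivity)]
    nlinarith
  have hfactorial :
      ((j : ℝ) + 1) * (j + 2) * (j + 3) * (b + 1) / (j + b + 1) ≤ (j + 3) ^ 3 := by
    rw [div_le_iff₀ (by positivity)]
    calc ((j : ℝ) + 1) * (j + 2) * (j + 3) * (b + 1)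
        ≤ (j + 3) * (j + 3) * (j + 3) * (j + b + 1) := by gcongr <;> linarith
      _ = (j + 3) ^ 3 * (j + b + 1) := by ring
  calc _ = (((j : ℝ) + b + 2) / ((j + 4) * (b + 2))) ^ 18 *
        (((j : ℝ) + 1) * (j + 2) * (j + 3) * (b + 1) / (j + b + 1)) ^ 3 /
        ((j + b).choose j * ρ ^ 8) := by
        rw [mul_pow, Nc_ratio_sq hρ.ne', factorial_ratio_eq_div_choose]
        field_simp
    _ ≤ 1 ^ 18 * ((j + 3) ^ 3) ^ 3 / (2 ^ j * ρ ^ 8) := by gcongr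
    _ = ((j : ℝ) + 3) ^ 9 / (2 ^ j * ρ ^ 8) := by ring

end HypP

/-- estimate (3.3): for `j ≤ ⌊m/2⌋`,
`(m!/(j!(m−j)!)) · N_{ρ,m+1}/(N_{ρ,j+3}N_{ρ,m−j+1}) ≤ C/(j+1)`. -/
theorem weight_estimate_fe1 (ρ₀ : ℝ) (hρ₀ : 0 < ρ₀) :
    ∃ C : ℝ, 0 < C ∧
      ∀ ρ : ℝ, (Real.exp 1)⁻¹ * ρ₀ ≤ ρ → ρ ≤ ρ₀ →
        ∀ m j : ℕ, j ≤ m / 2 →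
          (m.factorial : ℝ) / ((j.factorial : ℝ) * ((m - j).factorial : ℝ))
              * (Nc ρ (m + 1) / (Nc ρ (j + 3) * Nc ρ (m - j + 1)))
            ≤ C / ((j : ℝ) + 1) := by
  obtain ⟨K, hK, hpow⟩ := exists_natCast_pow_le_mul_pow 11 one_lt_two
  refine ⟨√(8 * K * (exp 1 / ρ₀) ^ 8), by positivity, ?_⟩
  intro ρ hρ_lower _ m j hj
  have hρ : 0 < ρ := lt_of_lt_of_le (by positivity) hρ_lower
  have hρ_inv : 1 / ρ ≤ exp 1 / ρ₀ := by
    calc 1 / ρ ≤ 1 / ((exp 1)⁻¹ * ρ₀) := one_div_le_one_div_of_le (by positivity) hρ_lower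
      _ = exp 1 / ρ₀ := by field_simp
  obtain ⟨b, rfl⟩ : ∃ b, m = j + b := ⟨m - j, by omega⟩
  rw [← Nat.cast_choose ℝ (Nat.le_add_right j b), Nat.add_sub_cancel_left,
    le_div_iff₀ (by positivity)]
  refine (le_abs_self _).trans (Real.abs_le_sqrt ?_)
  calc _ ≤ ((j : ℝ) + 3) ^ 9 / (2 ^ j * ρ ^ 8) * ((j : ℝ) + 3) ^ 2 := by
        rw [mul_pow]
        gcongr
        · exact HypP.sq_choose_mul_Nc_ratio_le hρ (by omega)
        · linarith
    _ = 8 * (((j + 3 : ℕ) : ℝ) ^ 11 / 2 ^ (j + 3)) * (1 / ρ) ^ 8 := by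
        push_cast
        field_simp
        ring
    _ ≤ 8 * K * (exp 1 / ρ₀) ^ 8 := by
        gcongr
        rw [div_le_iff₀ (by positivity)]
        exact hpow _
end
end

section
/- There exists a constant C, depending only on ρ₀, such that for all integers k ≥ 0 and all 1 ≤ i ≤ ⌊(k+1)/2⌋, ((k+1)!/(i!(k+1−i)!)) · (k+1)^{−1/2} · L_{ρ,k}/(H_{ρ,4,i−1}·L_{ρ,k+1−i}) ≤ C·(k+2−i)^{1/2}/(i+1). -/
open MeasureTheory Real Filter

noncomputable section

open HypP

/-! Write `i = n + 1` and `k = n + j`, so that `n < j`. All factorials cancel: the binomial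
coefficient times the factorial part of `L_{ρ,k} / (H_{ρ,4,n} L_{ρ,j})` is `(n+2)(n+3)(n+4)(j+1)`,
and the powers of `ρ` leave `√24 ρ⁻⁵ ≤ 5 e⁵ / ρ₀⁵`. Since `n ≤ j`, the polynomial weights give
`(n+j+2)⁹ / ((n+5)⁹ (j+2)⁹) ≤ 2⁹ / (n+5)⁹`, which absorbs `(n+2)(n+3)(n+4)` with a factor
`1/(n+2)` to spare, and the remaining `(j+1) / √(k+1)` is at most `√(j+1)`. -/

open scoped Nat

lemma inv_pow_le_exp_div_pow {ρ ρ₀ : ℝ} (hρ₀ : 0 < ρ₀) (hρ : (exp 1)⁻¹ * ρ₀ ≤ ρ) (m : ℕ) :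
    ρ⁻¹ ^ m ≤ exp m / ρ₀ ^ m := by
  have hinv : ρ⁻¹ ≤ ((exp 1)⁻¹ * ρ₀)⁻¹ := inv_anti₀ (by positivity) hρ
  calc ρ⁻¹ ^ m ≤ ((exp 1)⁻¹ * ρ₀)⁻¹ ^ m :=
        pow_le_pow_left₀ (inv_nonneg.mpr ((by positivity : (0 : ℝ) ≤ _).trans hρ)) hinv m
    _ = exp m / ρ₀ ^ m := by
        rw [mul_inv, inv_inv, mul_pow, ← exp_nat_mul, mul_one, div_eq_mul_inv, inv_pow]

lemma div_sqrt_le_sqrt {a b : ℝ} (ha : 0 ≤ a) (hab : a ≤ b) : a / √b ≤ √a := by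
  rcases ha.eq_or_lt with rfl | ha
  · simp
  calc a / √b ≤ a / √a := div_le_div_of_nonneg_left ha.le (sqrt_pos.mpr ha) (sqrt_le_sqrt hab)
    _ = √a := div_sqrt

lemma cubic_mul_pow_nine_ratio_le {n j : ℝ} (hn : 0 ≤ n) (hnj : n ≤ j) :
    (n + 2) * (n + 3) * (n + 4) * ((n + j + 2) ^ 9 / ((n + 5) ^ 9 * (j + 2) ^ 9))
      ≤ 2 ^ 9 / (n + 2) := by
  have hj : 0 ≤ j := hn.trans hnj
  have hsum : (n + j + 2) ^ 9 ≤ 2 ^ 9 * (j + 2) ^ 9 := by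
    rw [← mul_pow]; exact pow_le_pow_left₀ (by linarith) (by linarith) 9
  have hcub : (n + 2) * (n + 3) * (n + 4) * (n + 2) ≤ (n + 5) ^ 9 :=
    calc (n + 2) * (n + 3) * (n + 4) * (n + 2) ≤ (n + 5) * (n + 5) * (n + 5) * (n + 5) := by
          gcongr <;> linarith
      _ = (n + 5) ^ 4 := by ring
      _ ≤ (n + 5) ^ 9 := pow_le_pow_right₀ (by linarith) (by norm_num)
  rw [mul_div_assoc', div_le_div_iff₀ (by positivity) (by positivity)]
  calc (n + 2) * (n + 3) * (n + 4) * (n + j + 2) ^ 9 * (n + 2)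
      = ((n + 2) * (n + 3) * (n + 4) * (n + 2)) * (n + j + 2) ^ 9 := by ring
    _ ≤ (n + 5) ^ 9 * (2 ^ 9 * (j + 2) ^ 9) := by gcongr
    _ = 2 ^ 9 * ((n + 5) ^ 9 * (j + 2) ^ 9) := by ring

namespace HypP

lemma choose_mul_Lc_div_Hc_four_mul_Lc (ρ : ℝ) (n j : ℕ) :
    ((n + j + 1)! : ℝ) / ((n + 1)! * j !) * (Lc ρ (n + j) / (Hc ρ 4 n * Lc ρ j))
      = ρ⁻¹ ^ 5 * √24 * ((n + 2) * (n + 3) * (n + 4) * (j + 1))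
          * ((n + j + 2) ^ 9 / ((n + 5) ^ 9 * (j + 2) ^ 9)) := by
  rcases eq_or_ne ρ 0 with rfl | hρ
  · simp [Lc, Hc]
  have hfact_n : ((4 + n)! : ℝ) = (n + 2) * (n + 3) * (n + 4) * (n + 1)! := by
    rw [show 4 + n = n + 1 + 1 + 1 + 1 by ring]
    push_cast [Nat.factorial_succ]
    ring
  have hfact_j : ((1 + j)! : ℝ) = (j + 1) * j ! := by
    rw [add_comm, Nat.factorial_succ]
    push_cast
    ring
  unfold Lc Hc
  rw [hfact_n, hfact_j, show 1 + (n + j) = n + j + 1 by ring,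
    show ((4 : ℕ)! : ℝ) = 24 by rfl]
  push_cast
  rw [show (1 : ℝ) + (n + j) + 1 = n + j + 2 by ring, show (4 : ℝ) + n + 1 = n + 5 by ring,
    show (1 : ℝ) + j + 1 = j + 2 by ring]
  field_simp
  ring

lemma choose_mul_weight_ratio_le {ρ₀ ρ : ℝ} (hρ₀ : 0 < ρ₀) (hρ : (exp 1)⁻¹ * ρ₀ ≤ ρ)
    {n j : ℕ} (hnj : n ≤ j) :
    ((n + j + 1)! : ℝ) / ((n + 1)! * j !) * (√(n + j + 1))⁻¹
        * (Lc ρ (n + j) / (Hc ρ 4 n * Lc ρ j))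
      ≤ 2560 * exp 5 / ρ₀ ^ 5 * √(j + 1) / (n + 2) := by
  have h24 : √24 ≤ 5 := sqrt_le_iff.mpr ⟨by norm_num, by norm_num⟩
  calc ((n + j + 1)! : ℝ) / ((n + 1)! * j !) * (√(n + j + 1))⁻¹
        * (Lc ρ (n + j) / (Hc ρ 4 n * Lc ρ j))
      = (ρ⁻¹ ^ 5 * √24) * ((n + 2) * (n + 3) * (n + 4)
          * ((n + j + 2) ^ 9 / ((n + 5) ^ 9 * (j + 2) ^ 9))) * ((j + 1) / √(n + j + 1)) := by
        rw [mul_right_comm, choose_mul_Lc_div_Hc_four_mul_Lc]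
        ring
    _ ≤ (exp 5 / ρ₀ ^ 5 * 5) * (2 ^ 9 / (n + 2)) * √(j + 1) := by
        gcongr
        · exact_mod_cast inv_pow_le_exp_div_pow hρ₀ hρ 5
        · exact cubic_mul_pow_nine_ratio_le (Nat.cast_nonneg n) (by exact_mod_cast hnj)
        · exact div_sqrt_le_sqrt (by positivity) (by linarith)
    _ = 2560 * exp 5 / ρ₀ ^ 5 * √(j + 1) / (n + 2) := by ring

end HypP

/-- estimate (4.8): for `1 ≤ i ≤ ⌊(k+1)/2⌋`,
`((k+1)!/(i!(k+1−i)!)) (k+1)^{-1/2} L_{ρ,k}/(H_{ρ,4,i−1}L_{ρ,k+1−i}) ≤ C(k+2−i)^{1/2}/(i+1)`. -/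
theorem weight_estimate_fe3 (ρ₀ : ℝ) (hρ₀ : 0 < ρ₀) :
    ∃ C : ℝ, 0 < C ∧
      ∀ ρ : ℝ, (Real.exp 1)⁻¹ * ρ₀ ≤ ρ → ρ ≤ ρ₀ →
        ∀ k i : ℕ, 1 ≤ i → i ≤ (k + 1) / 2 →
          ((k + 1).factorial : ℝ) / ((i.factorial : ℝ) * ((k + 1 - i).factorial : ℝ))
              * (Real.sqrt ((k : ℝ) + 1))⁻¹
              * (Lc ρ k / (Hc ρ 4 (i - 1) * Lc ρ (k + 1 - i)))
            ≤ C * Real.sqrt ((k : ℝ) + 2 - (i : ℝ)) / ((i : ℝ) + 1) := by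
  refine ⟨2560 * exp 5 / ρ₀ ^ 5, by positivity, fun ρ hρ _ k i hi hik => ?_⟩
  obtain ⟨n, rfl⟩ : ∃ n, i = n + 1 := ⟨i - 1, by omega⟩
  obtain ⟨j, hnj, rfl⟩ : ∃ j, n < j ∧ k = n + j := ⟨k - n, by omega, by omega⟩
  rw [show n + j + 1 - (n + 1) = j by omega, Nat.add_sub_cancel]
  have hsqrt : ((n + j : ℕ) : ℝ) + 2 - ((n + 1 : ℕ) : ℝ) = j + 1 := by push_cast; ring
  have hden : ((n + 1 : ℕ) : ℝ) + 1 = n + 2 := by push_cast; ring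
  rw [hsqrt, hden]
  exact_mod_cast choose_mul_weight_ratio_le hρ₀ hρ hnj.le
end
end

section
/- There exists a constant C, depending only on ρ₀, such that for all integers k ≥ 0 and all i with ⌊(k+1)/2⌋ + 1 ≤ i ≤ k+1 and i ≥ 2, ((k+1)!/(i!(k+1−i)!)) · (k+1)^{−1/2} · L_{ρ,k}/(H_{ρ,2,i−2}·H_{ρ,3,k+2−i}) ≤ C/(k+3−i). -/
open MeasureTheory Real Filter

noncomputable section

open HypP

/-!
Write `i = j + 2` and `k = j + l + 1`; the hypothesis on `i` says `l ≤ j + 1`. The factorials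
of the binomial coefficient and of `L_{ρ,k}` cancel against those of the two `H`-weights up to
`(l+4)!/l! = (l+1)(l+2)(l+3)(l+4)`, and the powers of `ρ` leave `ρ⁻⁵ ≤ (e/ρ₀)⁵`. What remains
is `√12 · ((j+l+3)/(j+3))⁹ · (l+1)(l+2)(l+3)(l+4)/(l+5)⁹`, where the first ratio is at most
`2` because `l ≤ j + 1`, and the second is at most `1/(l+2)` since the ninth power of `l+5`
beats a polynomial of degree five.
-/

namespace HypP

theorem binomial_mul_Lc_div_Hc_two_mul_Hc_three {ρ : ℝ} (hρ : ρ ≠ 0) (j l : ℕ) :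
    ((j + l + 2).factorial : ℝ) / ((j + 2).factorial * l.factorial)
        * (Lc ρ (j + l + 1) / (Hc ρ 2 j * Hc ρ 3 (l + 1)))
      = √12 * ρ⁻¹ ^ 5 * (((j : ℝ) + l + 3) / (j + 3)) ^ 9
        * ((l + 1) * (l + 2) * (l + 3) * (l + 4) / ((l : ℝ) + 5) ^ 9) := by
  have hfact : ((l + 4).factorial : ℝ) = (l + 1) * (l + 2) * (l + 3) * (l + 4) * l.factorial := by
    push_cast [Nat.factorial_succ]
    ring
  have hsqrt : √12 = √2 * √6 := by
    rw [← Real.sqrt_mul (by norm_num)]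
    norm_num
  simp only [Lc, Hc, Nat.factorial_one, Nat.factorial_two, show Nat.factorial 3 = 6 from rfl,
    hsqrt]
  rw [show 1 + (j + l + 1) = j + l + 2 by ring, show 2 + j = j + 2 by ring,
    show 3 + (l + 1) = l + 4 by ring, hfact]
  have : (0 : ℝ) < √2 := by positivity
  have : (0 : ℝ) < √6 := by positivity
  field_simp
  push_cast
  ring

theorem four_consecutive_prod_div_pow_nine_le (x : ℝ) (hx : 0 ≤ x) :
    (x + 1) * (x + 2) * (x + 3) * (x + 4) / (x + 5) ^ 9 ≤ 1 / (x + 2) := by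
  rw [div_le_div_iff₀ (by positivity) (by positivity)]
  calc (x + 1) * (x + 2) * (x + 3) * (x + 4) * (x + 2)
      ≤ (x + 5) ^ 5 := by
        rw [pow_succ, pow_succ, pow_succ, pow_succ, pow_one]
        gcongr <;> linarith
    _ ≤ 1 * (x + 5) ^ 9 := by
        rw [one_mul]
        exact pow_le_pow_right₀ (by linarith) (by norm_num)

end HypP

/-- estimate (4.10): for `⌊(k+1)/2⌋ + 1 ≤ i ≤ k+1`, `i ≥ 2`,
`((k+1)!/(i!(k+1−i)!)) (k+1)^{-1/2} L_{ρ,k}/(H_{ρ,2,i−2}H_{ρ,3,k+2−i}) ≤ C/(k+3−i)`. -/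
theorem weight_estimate_fe4 (ρ₀ : ℝ) (hρ₀ : 0 < ρ₀) :
    ∃ C : ℝ, 0 < C ∧
      ∀ ρ : ℝ, (Real.exp 1)⁻¹ * ρ₀ ≤ ρ → ρ ≤ ρ₀ →
        ∀ k i : ℕ, (k + 1) / 2 + 1 ≤ i → i ≤ k + 1 → 2 ≤ i →
          ((k + 1).factorial : ℝ) / ((i.factorial : ℝ) * ((k + 1 - i).factorial : ℝ))
              * (Real.sqrt ((k : ℝ) + 1))⁻¹
              * (Lc ρ k / (Hc ρ 2 (i - 2) * Hc ρ 3 (k + 2 - i)))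
            ≤ C / ((k : ℝ) + 3 - (i : ℝ)) := by
  refine ⟨4 * (exp 1 / ρ₀) ^ 5 * 2 ^ 9, by positivity, ?_⟩
  intro ρ hρ_ge _ k i hi _ hi2
  obtain ⟨j, rfl⟩ : ∃ j, i = j + 2 := ⟨i - 2, by omega⟩
  obtain ⟨l, rfl⟩ : ∃ l, k = j + l + 1 := ⟨k - j - 1, by omega⟩
  have hρ : 0 < ρ := lt_of_lt_of_le (by positivity) hρ_ge
  rw [show j + l + 1 + 1 - (j + 2) = l by omega, show j + l + 1 + 2 - (j + 2) = l + 1 by omega,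
    show j + 2 - 2 = j by omega, show j + l + 1 + 1 = j + l + 2 by omega, mul_right_comm,
    binomial_mul_Lc_div_Hc_two_mul_Hc_three hρ.ne']
  have hsqrt12 : √12 ≤ 4 := Real.sqrt_le_iff.mpr ⟨by norm_num, by norm_num⟩
  have hρinv : ρ⁻¹ ≤ exp 1 / ρ₀ := by
    rw [div_eq_mul_inv, ← inv_inv (exp 1), ← mul_inv]
    exact inv_anti₀ (by positivity) hρ_ge
  have hratio : ((j : ℝ) + l + 3) / (j + 3) ≤ 2 := by
    rw [div_le_iff₀ (by positivity)]
    have : (l : ℝ) ≤ j + 1 := by exact_mod_cast (by omega : l ≤ j + 1)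
    linarith
  have hsqrt : (√(((j + l + 1 : ℕ) : ℝ) + 1))⁻¹ ≤ 1 :=
    inv_le_one_of_one_le₀ (Real.one_le_sqrt.mpr (le_add_of_nonneg_left (Nat.cast_nonneg _)))
  calc _ ≤ 4 * (exp 1 / ρ₀) ^ 5 * 2 ^ 9 * (1 / ((l : ℝ) + 2)) * 1 := by
        gcongr ?_ * ?_ ^ 5 * ?_ ^ 9 * ?_ * ?_
        exact four_consecutive_prod_div_pow_nine_le l l.cast_nonneg
    _ = _ := by push_cast; ring
end
end

section
/- There exists a constant C, depending only on ρ₀, such that for all integers m ≥ 0 and all 1 ≤ j ≤ ⌊m/2⌋, (m!/(j!(m−j)!)) · (m+1)^{1/2} · N_{ρ,m+1}/(N_{ρ,j+3}·H_{ρ,m−j+1,1}) ≤ C·(m−j+1)^{3/2}/(j+1). -/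
open MeasureTheory Real Filter

noncomputable section

open HypP

/-!
Write `m = j + b`, so that `1 ≤ j ≤ b`. In the ratio of weights all powers of `ρ` cancel except
`ρ⁻⁵`, and together with the binomial coefficient the factorials collapse to the rational factor
`(j+1)(j+2)(j+3)(b+1)(b+2)/(j+b+1)` times `√((j+3)!(b+1)!/(j+b)!)`. Since `(j-1)!(b+1)!` divides
`(j+b)!`, the square root is at most `(j+4)²`. The polynomial weights
`(j+b+2)⁹/((j+4)⁹(b+3)⁹)` then absorb every factor except `(b+1)/(j+1)`, which is even better than
the claimed `(b+1)^{3/2}/(j+1)`.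
-/

open scoped Nat

def weightRatioRational (a b : ℕ) : ℝ :=
  (((a : ℝ) + b + 2) ^ 9 / (((a : ℝ) + 4) ^ 9 * ((b : ℝ) + 3) ^ 9))
    * (((a : ℝ) + 1) * (a + 2) * (a + 3) * (b + 1) * (b + 2) / (a + b + 1))

theorem factorial_add_three_mul_factorial_succ_le {a : ℕ} (ha : 1 ≤ a) (b : ℕ) :
    (a + 3)! * (b + 1)! ≤ (a + 4) ^ 4 * (a + b)! := by
  obtain ⟨c, rfl⟩ : ∃ c, a = c + 1 := ⟨a - 1, by omega⟩
  have hdvd : c ! * (b + 1)! ≤ (c + 1 + b)! := by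
    rw [show c + 1 + b = c + (b + 1) by omega]
    exact Nat.le_of_dvd (Nat.factorial_pos _) (Nat.factorial_mul_factorial_dvd_factorial_add _ _)
  have hexp : (c + 1 + 3)! = (c + 4) * (c + 3) * (c + 2) * (c + 1) * c ! := by
    simp only [Nat.factorial_succ]; ring
  have hpoly : (c + 4) * (c + 3) * (c + 2) * (c + 1) ≤ (c + 1 + 4) ^ 4 := by
    rw [pow_succ, pow_succ, pow_succ, pow_one]; gcongr <;> omega
  calc (c + 1 + 3)! * (b + 1)! = (c + 4) * (c + 3) * (c + 2) * (c + 1) * (c ! * (b + 1)!) := by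
        rw [hexp]; ring
    _ ≤ (c + 1 + 4) ^ 4 * (c + 1 + b)! := Nat.mul_le_mul hpoly hdvd

theorem sqrt_factorial_ratio_le {a : ℕ} (ha : 1 ≤ a) (b : ℕ) :
    √(((a + 3)! * (b + 1)! : ℝ) / (a + b)!) ≤ ((a : ℝ) + 4) ^ 2 := by
  rw [Real.sqrt_le_left (by positivity), div_le_iff₀ (by positivity), ← pow_mul]
  exact_mod_cast factorial_add_three_mul_factorial_succ_le ha b

theorem weight_ratio_eq {ρ : ℝ} (hρ : ρ ≠ 0) (a b : ℕ) :
    ((a + b)! : ℝ) / ((a ! : ℝ) * (b ! : ℝ)) * √((a : ℝ) + b + 1)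
        * (Nc ρ (a + b + 1) / (Nc ρ (a + 3) * Hc ρ (b + 1) 1))
      = (ρ ^ 5)⁻¹ * weightRatioRational a b * √(((a + 3)! * (b + 1)! : ℝ) / (a + b)!) := by
  have hfac : ∀ n : ℕ, ((n + 1)! : ℝ) = (n + 1) * n ! := fun n => by
    push_cast [Nat.factorial_succ]; ring
  have hsqrt : √(((a + b + 1)! : ℝ)) = √((a : ℝ) + b + 1) * √((a + b)! : ℝ) := by
    rw [hfac, Real.sqrt_mul (by positivity)]; push_cast; ring_nf
  simp only [Nc, Hc, Real.sqrt_div' _ (Nat.cast_nonneg _), Real.sqrt_mul (Nat.cast_nonneg _),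
    Nat.cast_zero, add_zero, hsqrt, weightRatioRational]
  -- Freeze the square roots, so that the factorials are expanded only outside them.
  generalize √((a + 3)! : ℝ) = sA, √((b + 1)! : ℝ) = sB
  have hsC : 0 < √((a + b)! : ℝ) := by positivity
  have hs : 0 < √((a : ℝ) + b + 1) := by positivity
  generalize √((a + b)! : ℝ) = sC at hsC ⊢
  generalize √((a : ℝ) + b + 1) = s at hs ⊢
  rw [show a + 3 = a + 2 + 1 by rfl, hfac, show a + 2 = a + 1 + 1 by rfl,
    hfac, hfac, hfac, hfac, hfac]
  push_cast
  simp only [pow_add]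
  field_simp
  ring

theorem weightRatioRational_mul_le {a b : ℕ} (ha : 1 ≤ a) (hab : a ≤ b) :
    weightRatioRational a b * ((a : ℝ) + 4) ^ 2 ≤ 2 ^ 9 * (((b : ℝ) + 1) / (a + 1)) := by
  have ha' : (1 : ℝ) ≤ a := by exact_mod_cast ha
  have hab' : (a : ℝ) ≤ b := by exact_mod_cast hab
  have hsum : ((a : ℝ) + b + 2) ^ 9 / ((b : ℝ) + 3) ^ 9 ≤ 2 ^ 9 := by
    rw [div_le_iff₀ (by positivity), ← mul_pow]
    gcongr
    linarith
  have hpoly : ((a : ℝ) + 1) ^ 2 * (a + 2) * (a + 3) * (a + 4) ^ 2 / ((a : ℝ) + 4) ^ 9 ≤ 1 := by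
    rw [div_le_one (by positivity)]
    calc ((a : ℝ) + 1) ^ 2 * (a + 2) * (a + 3) * (a + 4) ^ 2
        ≤ ((a : ℝ) + 4) ^ 2 * (a + 4) * (a + 4) * (a + 4) ^ 2 := by gcongr <;> linarith
      _ = ((a : ℝ) + 4) ^ 6 := by ring
      _ ≤ ((a : ℝ) + 4) ^ 9 := pow_le_pow_right₀ (by linarith) (by norm_num)
  have hb : ((b : ℝ) + 2) / (a + b + 1) ≤ 1 := by
    rw [div_le_one (by positivity)]
    linarith
  calc weightRatioRational a b * ((a : ℝ) + 4) ^ 2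
      = ((a : ℝ) + b + 2) ^ 9 / ((b : ℝ) + 3) ^ 9
          * (((a : ℝ) + 1) ^ 2 * (a + 2) * (a + 3) * (a + 4) ^ 2 / ((a : ℝ) + 4) ^ 9)
          * (((b : ℝ) + 2) / (a + b + 1)) * (((b : ℝ) + 1) / (a + 1)) := by
        unfold weightRatioRational
        field_simp
    _ ≤ 2 ^ 9 * 1 * 1 * (((b : ℝ) + 1) / (a + 1)) := by gcongr
    _ = 2 ^ 9 * (((b : ℝ) + 1) / (a + 1)) := by ring

theorem binomial_mul_weight_ratio_le {ρ : ℝ} (hρ : 0 < ρ) {a b : ℕ} (ha : 1 ≤ a) (hab : a ≤ b) :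
    ((a + b)! : ℝ) / ((a ! : ℝ) * (b ! : ℝ)) * √((a : ℝ) + b + 1)
        * (Nc ρ (a + b + 1) / (Nc ρ (a + 3) * Hc ρ (b + 1) 1))
      ≤ 2 ^ 9 * (ρ ^ 5)⁻¹ * (((b : ℝ) + 1) / (a + 1)) := by
  have hW : 0 ≤ weightRatioRational a b := by unfold weightRatioRational; positivity
  have hbound : weightRatioRational a b * √(((a + 3)! * (b + 1)! : ℝ) / (a + b)!)
      ≤ 2 ^ 9 * (((b : ℝ) + 1) / (a + 1)) :=
    calc _ ≤ weightRatioRational a b * ((a : ℝ) + 4) ^ 2 := by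
          gcongr
          exact sqrt_factorial_ratio_le ha b
      _ ≤ _ := weightRatioRational_mul_le ha hab
  calc _ = (ρ ^ 5)⁻¹ * (weightRatioRational a b * √(((a + 3)! * (b + 1)! : ℝ) / (a + b)!)) := by
        rw [weight_ratio_eq hρ.ne', mul_assoc]
    _ ≤ (ρ ^ 5)⁻¹ * (2 ^ 9 * (((b : ℝ) + 1) / (a + 1))) := by gcongr
    _ = _ := by ring

/-- estimate (4.17): for `1 ≤ j ≤ ⌊m/2⌋`,
`(m!/(j!(m−j)!)) (m+1)^{1/2} N_{ρ,m+1}/(N_{ρ,j+3}H_{ρ,m−j+1,1}) ≤ C(m−j+1)^{3/2}/(j+1)`. -/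
theorem weight_estimate_fe6 (ρ₀ : ℝ) (hρ₀ : 0 < ρ₀) :
    ∃ C : ℝ, 0 < C ∧
      ∀ ρ : ℝ, (Real.exp 1)⁻¹ * ρ₀ ≤ ρ → ρ ≤ ρ₀ →
        ∀ m j : ℕ, 1 ≤ j → j ≤ m / 2 →
          (m.factorial : ℝ) / ((j.factorial : ℝ) * ((m - j).factorial : ℝ))
              * Real.sqrt ((m : ℝ) + 1)
              * (Nc ρ (m + 1) / (Nc ρ (j + 3) * Hc ρ (m - j + 1) 1))
            ≤ C * ((m : ℝ) - (j : ℝ) + 1) ^ ((3 : ℝ) / 2) / ((j : ℝ) + 1) := by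
  refine ⟨2 ^ 9 * (Real.exp 1 / ρ₀) ^ 5, by positivity, ?_⟩
  intro ρ hρ_ge _ m j hj hjm
  obtain ⟨b, rfl⟩ : ∃ b, m = j + b := ⟨m - j, by omega⟩
  have hρ : 0 < ρ := lt_of_lt_of_le (by positivity) hρ_ge
  have hρ_inv : (ρ ^ 5)⁻¹ ≤ (Real.exp 1 / ρ₀) ^ 5 := by
    rw [← inv_pow]
    gcongr
    rw [inv_le_comm₀ hρ (by positivity), inv_div, div_eq_inv_mul]
    exact hρ_ge
  have hb : ((b : ℝ) + 1) ≤ ((b : ℝ) + 1) ^ ((3 : ℝ) / 2) :=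
    Real.self_le_rpow_of_one_le (by linarith [b.cast_nonneg (α := ℝ)]) (by norm_num)
  rw [Nat.add_sub_cancel_left, Nat.cast_add, add_sub_cancel_left, mul_div_assoc]
  calc _ ≤ 2 ^ 9 * (ρ ^ 5)⁻¹ * (((b : ℝ) + 1) / (j + 1)) :=
        binomial_mul_weight_ratio_le hρ hj (by omega)
    _ ≤ _ := by gcongr
end
end

section
/- There exists a constant C, depending only on ρ₀, such that for all integers m ≥ 0, k ≥ 0 and all integers i ≥ 1, j ≥ 0 with j ≤ m, i ≤ k+1 and 1 ≤ i+j ≤ ⌊(m+k+1)/2⌋, one has binom(m,j)·binom(k+1,i)·(m+k+1)^{−1/2}·(m+1)·H_{ρ,m+1,k}/(H_{ρ,j+4,i−1}·H_{ρ,m−j+1,k+1−i}) ≤ C·(j+4)·(m−j+1)·(i+j+1)^{−2}·(m+k−i−j+2)^{1/2}. -/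
open MeasureTheory Real Filter

noncomputable section

open HypP

/-!
Write `i = a + 1`, `m = j + d`, `k = a + e`. The quotient of weights splits into the power
`ρ⁻⁵ ≤ (exp 1 / ρ₀)⁵`, a quotient of ninth powers which is at most `2⁹ / (a + j + 5)⁹` because
`i + j ≤ (m + k + 1) / 2` forces `m + k + 2 ≤ 2 (d + e + 2)`, and quotients of factorials.
By Vandermonde, `C(m, j) C(k + 1, i) ≤ C(m + k + 1, i + j)`, which cancels `(m + k + 1)!` against
`(i + j)! (m + k + 1 - i - j)!`, and `(j + 4)! (d + 1)! ≤ (j + 4)³ (m + 1)!` handles the square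
roots of factorials. What is left is a polynomial of degree at most 7 in `a + j`, absorbed by
`(a + j + 5)⁹`.
-/

open scoped Nat

namespace Nat

open Finset

theorem choose_mul_choose_mul_factorial_mul_factorial_le (a b c e : ℕ) :
    (a + b).choose a * (c + e).choose c * (a + c)! * (b + e)! ≤ (a + b + (c + e))! := by
  have vandermonde : (a + b).choose a * (c + e).choose c ≤ (a + b + (c + e)).choose (a + c) := by
    rw [add_choose_eq (a + b) (c + e) (a + c)]
    exact single_le_sum (f := fun p : ℕ × ℕ => (a + b).choose p.1 * (c + e).choose p.2)
      (fun _ _ => Nat.zero_le _) (mem_antidiagonal.2 rfl : (a, c) ∈ antidiagonal (a + c))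
  calc (a + b).choose a * (c + e).choose c * (a + c)! * (b + e)!
      ≤ (a + b + (c + e)).choose (a + c) * (a + c)! * (b + e)! := by gcongr
    _ = (a + b + (c + e))! := by
      rw [show a + b + (c + e) = b + e + (a + c) by ring, Nat.mul_right_comm,
        add_choose_mul_factorial_mul_factorial]

theorem succ_factorial_mul_succ_factorial_le (a b : ℕ) : (a + 1)! * (b + 1)! ≤ (a + b + 1)! := by
  have hb : b + 1 ≤ (a + 1 + b).choose b := by
    rw [← choose_succ_self_right b]
    exact choose_le_choose b (by omega)
  calc (a + 1)! * (b + 1)! = (b + 1) * ((a + 1)! * b !) := by rw [factorial_succ b]; ring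
    _ ≤ (a + 1 + b).choose b * ((a + 1)! * b !) := by gcongr
    _ = (a + b + 1)! := by
      rw [← Nat.mul_assoc, add_choose_mul_factorial_mul_factorial, Nat.add_right_comm]

theorem factorial_add_le_pow_mul_factorial (n k : ℕ) : (n + k)! ≤ (n + k) ^ k * n ! := by
  rw [← factorial_mul_descFactorial (Nat.le_add_left k n), Nat.add_sub_cancel, Nat.mul_comm]
  exact Nat.mul_le_mul_right _ (descFactorial_le_pow _ _)

end Nat

namespace HypP

-- The ninth-power bases are casts of ℕ sums, so that index rewrites never leave `ring` a ninth
-- power of a sum to expand.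
theorem Hc_div_Hc_mul_Hc (ρ : ℝ) (p q a b c e : ℕ) : Hc ρ p q / (Hc ρ a b * Hc ρ c e) =
    ρ ^ (p + q + 1) / (ρ ^ (a + b + 1) * ρ ^ (c + e + 1))
      * (((p + q + 1 : ℕ) : ℝ) ^ 9 / (((a + b + 1 : ℕ) : ℝ) ^ 9 * ((c + e + 1 : ℕ) : ℝ) ^ 9))
      * (((a + b)! : ℝ) * (c + e)! / (p + q)!)
      * (√(a ! : ℝ) * √(c ! : ℝ) / √(p ! : ℝ)) := by
  unfold Hc
  push_cast
  generalize ((p : ℝ) + q + 1) ^ 9 = P, ((a : ℝ) + b + 1) ^ 9 = A, ((c : ℝ) + e + 1) ^ 9 = C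
  simp only [div_eq_mul_inv, mul_inv, inv_inv]
  ring

theorem choose_mul_choose_mul_factorial_div_le (a j d e : ℕ) :
    ((j + d).choose j * (a + e + 1).choose (a + 1)
        * ((a + j + 4)! * (d + e + 1)! / (j + d + a + e + 1)!) : ℝ)
      ≤ ((a : ℝ) + j + 2) * (a + j + 3) * (a + j + 4) * (d + e + 1) := by
  have vandermonde := Nat.choose_mul_choose_mul_factorial_mul_factorial_le j d (a + 1) e
  rw [show j + d + (a + 1 + e) = j + d + a + e + 1 by ring, show a + 1 + e = a + e + 1 by ring,
    show j + (a + 1) = a + j + 1 by ring] at vandermonde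
  have key : (j + d).choose j * (a + e + 1).choose (a + 1) * ((a + j + 4)! * (d + e + 1)!)
      ≤ (a + j + 2) * (a + j + 3) * (a + j + 4) * (d + e + 1) * (j + d + a + e + 1)! := by
    rw [show a + j + 4 = a + j + 1 + 1 + 1 + 1 by ring, Nat.factorial_succ, Nat.factorial_succ,
      Nat.factorial_succ, Nat.factorial_succ (d + e)]
    calc _ = (a + j + 1 + 1) * (a + j + 1 + 1 + 1) * (a + j + 1 + 1 + 1 + 1) * (d + e + 1)
          * ((j + d).choose j * (a + e + 1).choose (a + 1) * (a + j + 1)! * (d + e)!) := by ring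
      _ ≤ _ := by gcongr
  rw [mul_div_assoc', div_le_iff₀ (by positivity)]
  exact_mod_cast key

theorem sqrt_factorial_mul_sqrt_factorial_div_le (j d : ℕ) :
    √((j + 4)! : ℝ) * √((d + 1)! : ℝ) / √((j + d + 1)! : ℝ) ≤ ((j : ℝ) + 4) * √((j : ℝ) + 4) := by
  have key : ((j + 4)! * (d + 1)! : ℝ) ≤ ((j : ℝ) + 4) ^ 2 * ((j + 4) * (j + d + 1)!) := by
    have h₁ := Nat.factorial_add_le_pow_mul_factorial (j + 1) 3
    rw [show j + 1 + 3 = j + 4 by ring] at h₁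
    have key_nat : (j + 4)! * (d + 1)! ≤ (j + 4) ^ 3 * (j + d + 1)! :=
      calc (j + 4)! * (d + 1)! ≤ (j + 4) ^ 3 * (j + 1)! * (d + 1)! := by gcongr
        _ ≤ (j + 4) ^ 3 * (j + d + 1)! := by
          rw [Nat.mul_assoc]
          exact Nat.mul_le_mul_left _ (Nat.succ_factorial_mul_succ_factorial_le j d)
    rw [← mul_assoc, ← pow_succ]
    exact_mod_cast key_nat
  rw [div_le_iff₀ (by positivity)]
  calc √((j + 4)! : ℝ) * √((d + 1)! : ℝ) = √((j + 4)! * (d + 1)! : ℝ) :=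
        (Real.sqrt_mul (by positivity) _).symm
    _ ≤ √(((j : ℝ) + 4) ^ 2 * ((j + 4) * (j + d + 1)!)) := Real.sqrt_le_sqrt key
    _ = ((j : ℝ) + 4) * √((j : ℝ) + 4) * √((j + d + 1)! : ℝ) := by
      rw [Real.sqrt_mul (by positivity), Real.sqrt_sq (by positivity),
        Real.sqrt_mul (by positivity), mul_assoc]

theorem inv_pow_le_exp_div_pow {ρ₀ ρ : ℝ} (hρ₀ : 0 < ρ₀) (hρ : (exp 1)⁻¹ * ρ₀ ≤ ρ) (n : ℕ) :
    (ρ ^ n)⁻¹ ≤ (exp 1 / ρ₀) ^ n := by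
  have hρinv : ρ⁻¹ ≤ exp 1 / ρ₀ :=
    calc ρ⁻¹ ≤ ((exp 1)⁻¹ * ρ₀)⁻¹ := inv_anti₀ (by positivity) hρ
      _ = exp 1 / ρ₀ := by rw [mul_inv, inv_inv, div_eq_mul_inv]
  rw [← inv_pow]
  gcongr
  exact inv_nonneg.2 (le_trans (by positivity) hρ)

theorem pow_div_pow_mul_pow_le {x y z c : ℝ} (hx : 0 ≤ x) (hy : 0 < y) (hz : 0 < z)
    (hxz : x ≤ c * z) (n : ℕ) : x ^ n / (y ^ n * z ^ n) ≤ c ^ n / y ^ n := by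
  rw [mul_comm, ← div_div]
  gcongr
  rw [div_le_iff₀ (by positivity), ← mul_pow]
  gcongr

theorem mul_inv_sqrt_le_sqrt {x y : ℝ} (hx : 0 < x) (hxy : x ≤ y) : x * (√y)⁻¹ ≤ √x := by
  rw [← div_eq_mul_inv, ← Real.div_sqrt (x := x)]
  exact div_le_div_of_nonneg_left hx.le (by positivity) (Real.sqrt_le_sqrt hxy)

theorem mul_sqrt_div_pow_nine_le_inv_sq (a j : ℕ) :
    ((a : ℝ) + j + 2) * (a + j + 3) * (a + j + 4) * (j + 1) * √((j : ℝ) + 4)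
      / ((a + j + 5 : ℕ) : ℝ) ^ 9 ≤ (((a : ℝ) + j + 2) ^ 2)⁻¹ := by
  have ha : (0 : ℝ) ≤ a := a.cast_nonneg
  have hj : (0 : ℝ) ≤ j := j.cast_nonneg
  have hsqrt : √((j : ℝ) + 4) ≤ a + j + 5 := (Real.sqrt_le_left (by positivity)).2 (by nlinarith)
  push_cast
  rw [div_le_iff₀ (by positivity), inv_mul_eq_div, le_div_iff₀ (by positivity)]
  calc ((a : ℝ) + j + 2) * (a + j + 3) * (a + j + 4) * (j + 1) * √((j : ℝ) + 4) * (a + j + 2) ^ 2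
      ≤ ((a : ℝ) + j + 5) * (a + j + 5) * (a + j + 5) * (a + j + 5) * (a + j + 5)
          * (a + j + 5) ^ 2 := by
        gcongr <;> linarith
    _ = ((a : ℝ) + j + 5) ^ 7 := by ring
    _ ≤ ((a : ℝ) + j + 5) ^ 9 := pow_le_pow_right₀ (by linarith) (by norm_num)

theorem choose_mul_choose_mul_Hc_div_le {ρ₀ ρ : ℝ} (hρ₀ : 0 < ρ₀) (hρ : (exp 1)⁻¹ * ρ₀ ≤ ρ)
    {a j d e : ℕ} (h : a + j + 1 ≤ d + e) :
    ((j + d).choose j : ℝ) * ((a + e + 1).choose (a + 1) : ℝ)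
        * (√((j : ℝ) + d + a + e + 1))⁻¹ * ((j : ℝ) + d + 1)
        * (Hc ρ (j + d + 1) (a + e) / (Hc ρ (j + 4) a * Hc ρ (d + 1) e))
      ≤ 2 ^ 9 * (exp 1 / ρ₀) ^ 5 * ((j : ℝ) + 4) * ((d : ℝ) + 1) * (((a : ℝ) + j + 2) ^ 2)⁻¹
        * √((d : ℝ) + e + 1) := by
  have hρpos : 0 < ρ := lt_of_lt_of_le (by positivity) hρ
  have rho_pow : ρ ^ (j + d + a + e + 2) / (ρ ^ (a + j + 5) * ρ ^ (d + e + 2))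
      ≤ (exp 1 / ρ₀) ^ 5 := by
    rw [show ρ ^ (a + j + 5) * ρ ^ (d + e + 2) = ρ ^ (j + d + a + e + 2) * ρ ^ 5 by ring,
      div_mul_cancel_left₀ (by positivity)]
    exact inv_pow_le_exp_div_pow hρ₀ hρ 5
  have ninth_powers : ((j + d + a + e + 2 : ℕ) : ℝ) ^ 9
        / (((a + j + 5 : ℕ) : ℝ) ^ 9 * ((d + e + 2 : ℕ) : ℝ) ^ 9)
      ≤ 2 ^ 9 / ((a + j + 5 : ℕ) : ℝ) ^ 9 :=
    pow_div_pow_mul_pow_le (by positivity) (by positivity) (by positivity)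
      (by exact_mod_cast (by omega)) 9
  have linear : (j : ℝ) + d + 1 ≤ (j + 1) * (d + 1) := by
    nlinarith [j.cast_nonneg (α := ℝ), d.cast_nonneg (α := ℝ)]
  calc
    _ = ((j + d).choose j * (a + e + 1).choose (a + 1)
            * ((a + j + 4)! * (d + e + 1)! / (j + d + a + e + 1)! : ℝ))
          * (√((j + 4)! : ℝ) * √((d + 1)! : ℝ) / √((j + d + 1)! : ℝ))
          * ((j : ℝ) + d + 1) * (√((j : ℝ) + d + a + e + 1))⁻¹
          * (ρ ^ (j + d + a + e + 2) / (ρ ^ (a + j + 5) * ρ ^ (d + e + 2)))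
          * (((j + d + a + e + 2 : ℕ) : ℝ) ^ 9
            / (((a + j + 5 : ℕ) : ℝ) ^ 9 * ((d + e + 2 : ℕ) : ℝ) ^ 9)) := by
      rw [Hc_div_Hc_mul_Hc, show j + d + 1 + (a + e) + 1 = j + d + a + e + 2 by ring,
        show j + 4 + a + 1 = a + j + 5 by ring, show d + 1 + e + 1 = d + e + 2 by ring,
        show j + d + 1 + (a + e) = j + d + a + e + 1 by ring,
        show j + 4 + a = a + j + 4 by ring, show d + 1 + e = d + e + 1 by ring]
      ring
    _ ≤ (((a : ℝ) + j + 2) * (a + j + 3) * (a + j + 4) * (d + e + 1))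
          * (((j : ℝ) + 4) * √((j : ℝ) + 4)) * ((j + 1) * (d + 1))
          * (√((j : ℝ) + d + a + e + 1))⁻¹ * (exp 1 / ρ₀) ^ 5
          * (2 ^ 9 / ((a + j + 5 : ℕ) : ℝ) ^ 9) := by
      gcongr ?_ * ?_ * ?_ * _ * ?_ * ?_
      exacts [choose_mul_choose_mul_factorial_div_le a j d e,
        sqrt_factorial_mul_sqrt_factorial_div_le j d]
    _ = 2 ^ 9 * (exp 1 / ρ₀) ^ 5 * ((j : ℝ) + 4) * ((d : ℝ) + 1)
          * (((a : ℝ) + j + 2) * (a + j + 3) * (a + j + 4) * (j + 1) * √((j : ℝ) + 4)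
            / ((a + j + 5 : ℕ) : ℝ) ^ 9)
          * (((d : ℝ) + e + 1) * (√((j : ℝ) + d + a + e + 1))⁻¹) := by
      ring
    _ ≤ _ := by
      gcongr
      · exact mul_sqrt_div_pow_nine_le_inv_sq a j
      · exact mul_inv_sqrt_le_sqrt (by positivity) (by linarith)

end HypP

/-- estimate (4.22): for `i ≥ 1`, `i ≤ k+1`, `j ≤ m`,
`1 ≤ i+j ≤ ⌊(m+k+1)/2⌋`,
`C(m,j)C(k+1,i)(m+k+1)^{-1/2}(m+1)H_{ρ,m+1,k}/(H_{ρ,j+4,i−1}H_{ρ,m−j+1,k+1−i})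
  ≤ C(j+4)(m−j+1)(i+j+1)^{-2}(m+k−i−j+2)^{1/2}`. -/
theorem weight_estimate_fe10 (ρ₀ : ℝ) (hρ₀ : 0 < ρ₀) :
    ∃ C : ℝ, 0 < C ∧
      ∀ ρ : ℝ, (Real.exp 1)⁻¹ * ρ₀ ≤ ρ → ρ ≤ ρ₀ →
        ∀ m k i j : ℕ, 1 ≤ i → i ≤ k + 1 → j ≤ m → 1 ≤ i + j → i + j ≤ (m + k + 1) / 2 →
          (m.choose j : ℝ) * ((k + 1).choose i : ℝ)
              * (Real.sqrt ((m : ℝ) + (k : ℝ) + 1))⁻¹ * ((m : ℝ) + 1)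
              * (Hc ρ (m + 1) k / (Hc ρ (j + 4) (i - 1) * Hc ρ (m - j + 1) (k + 1 - i)))
            ≤ C * ((j : ℝ) + 4) * ((m : ℝ) - (j : ℝ) + 1) * (((i : ℝ) + (j : ℝ) + 1) ^ 2)⁻¹
                * Real.sqrt ((m : ℝ) + (k : ℝ) - (i : ℝ) - (j : ℝ) + 2) := by
  refine ⟨2 ^ 9 * (exp 1 / ρ₀) ^ 5, by positivity, ?_⟩
  intro ρ hρ _ m k i j hi hik hjm _ hij
  obtain ⟨a, rfl⟩ : ∃ a, i = a + 1 := ⟨i - 1, by omega⟩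
  obtain ⟨d, rfl⟩ : ∃ d, m = j + d := ⟨m - j, by omega⟩
  obtain ⟨e, rfl⟩ : ∃ e, k = a + e := ⟨k - a, by omega⟩
  rw [Nat.add_sub_cancel, Nat.add_sub_cancel_left, show a + e + 1 - (a + 1) = e by omega]
  convert choose_mul_choose_mul_Hc_div_le hρ₀ hρ (show a + j + 1 ≤ d + e by omega) using 3 <;>
    push_cast <;> ring_nf
end
end
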